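/- In the ring of formal power series ℚ⟦X⟧, the exponential generating function F(X) = Σ_{n≥0} (b_n/n!)·X^n of the numbers of barred permutations satisfies (1 − X − X²/2) · F(X) = 1; equivalently, F(X) is the inverse of the power series 1 − X − X²/2. -/

import Mathlib

/-
Removing the first block `B` (of size 1 or 2) of a barred permutation of a finite set `S` leaves a
barred permutation of `S \ B`. Hence the number of barred permutations of `S` depends only on
`n = #S` and satisfies `b₀ = b₁ = 1`, `b_{n+2} = (n+2) b_{n+1} + C(n+2, 2) bₙ`. Divided by
`(n+2)!`, this recursion says that the coefficient of `X^{n+2}` in `(1 - X - X²/2) F` vanishes.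
-/

/-- A barred permutation of `[n]`: an ordered set partition of `Fin n` into
blocks of size 1 or 2, encoded as a list of pairwise disjoint subsets whose
union is everything. -/
def IsBarredPermutation {n : ℕ} (L : List (Finset (Fin n))) : Prop :=
  L.Pairwise Disjoint ∧ (∀ B ∈ L, B.card = 1 ∨ B.card = 2) ∧
    L.foldr (· ∪ ·) ∅ = Finset.univ

/-- `barredCount n` is the number of barred permutations of `[n]`. -/
noncomputable def barredCount (n : ℕ) : ℕ :=
  Nat.card { L : List (Finset (Fin n)) // IsBarredPermutation L }

open Finset

lemma sum_powersetCard_card {α M : Type*} [AddCommMonoid M] (S : Finset α) (k : ℕ) (f : ℕ → M) :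
    ∑ B ∈ S.powersetCard k, f B.card = S.card.choose k • f k := by
  rw [sum_congr rfl fun B hB => by rw [(mem_powersetCard.1 hB).2], sum_const, card_powersetCard]

def barredSeq : ℕ → ℕ
  | 0 => 1
  | 1 => 1
  | n + 2 => (n + 2) * barredSeq (n + 1) + (n + 2).choose 2 * barredSeq n

-- At `n = 0` the truncated `n - 1` is harmless, as `choose 1 2 = 0`.
lemma barredSeq_succ (n : ℕ) :
    barredSeq (n + 1) = (n + 1) * barredSeq n + (n + 1).choose 2 * barredSeq (n - 1) := by
  cases n <;> rfl

section BarredPermOf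

variable {α : Type*} [DecidableEq α]

def IsBarredPermOf (S : Finset α) (L : List (Finset α)) : Prop :=
  L.Pairwise Disjoint ∧ (∀ B ∈ L, B.card = 1 ∨ B.card = 2) ∧ L.foldr (· ∪ ·) ∅ = S

def barredBlocks (S : Finset α) : Finset (Finset α) :=
  S.powersetCard 1 ∪ S.powersetCard 2

lemma mem_barredBlocks {S B : Finset α} :
    B ∈ barredBlocks S ↔ B ⊆ S ∧ (B.card = 1 ∨ B.card = 2) := by
  simp [barredBlocks, and_or_left]

lemma disjoint_foldr_union {B : Finset α} {L : List (Finset α)} :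
    Disjoint B (L.foldr (· ∪ ·) ∅) ↔ ∀ C ∈ L, Disjoint B C := by
  induction L with
  | nil => simp
  | cons C L ih => simp [disjoint_union_right, ih]

lemma ssubset_of_mem_barredBlocks {S B : Finset α} (hB : B ∈ barredBlocks S) : S \ B ⊂ S := by
  obtain ⟨hBS, hcard⟩ := mem_barredBlocks.1 hB
  exact sdiff_ssubset hBS (card_pos.1 (by omega))

lemma isBarredPermOf_nil {S : Finset α} : IsBarredPermOf S [] ↔ S = ∅ := by
  simp [IsBarredPermOf, eq_comm]

lemma isBarredPermOf_cons {S B : Finset α} {L : List (Finset α)} :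
    IsBarredPermOf S (B :: L) ↔ B ∈ barredBlocks S ∧ IsBarredPermOf (S \ B) L := by
  simp only [IsBarredPermOf, mem_barredBlocks, List.pairwise_cons, List.forall_mem_cons,
    List.foldr_cons, ← disjoint_foldr_union]
  constructor
  · rintro ⟨⟨hB, hL⟩, ⟨hBcard, hLcard⟩, rfl⟩
    exact ⟨⟨subset_union_left, hBcard⟩, hL, hLcard, (union_sdiff_cancel_left hB).symm⟩
  · rintro ⟨⟨hBS, hBcard⟩, hL, hLcard, hU⟩
    exact ⟨⟨hU ▸ disjoint_sdiff, hL⟩, ⟨hBcard, hLcard⟩, hU ▸ union_sdiff_of_subset hBS⟩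

lemma isBarredPermOf_empty {L : List (Finset α)} : IsBarredPermOf ∅ L ↔ L = [] := by
  cases L with
  | nil => simp [isBarredPermOf_nil]
  | cons B L =>
    simp only [isBarredPermOf_cons, mem_barredBlocks, subset_empty, reduceCtorEq, iff_false]
    rintro ⟨⟨rfl, h⟩, -⟩
    simp at h

noncomputable def sigmaBarredPermOfEquiv {S : Finset α} (hS : S.Nonempty) :
    (Σ B : barredBlocks S, {L // IsBarredPermOf (S \ B) L}) ≃ {L // IsBarredPermOf S L} :=
  Equiv.ofBijective (fun p => ⟨p.1.1 :: p.2.1, isBarredPermOf_cons.2 ⟨p.1.2, p.2.2⟩⟩) <| by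
    constructor
    · rintro ⟨⟨B, hB⟩, ⟨L, hL⟩⟩ ⟨⟨B', hB'⟩, ⟨L', hL'⟩⟩ h
      obtain ⟨rfl, rfl⟩ := List.cons.inj (congrArg Subtype.val h)
      rfl
    · rintro ⟨_ | ⟨B, L⟩, hL⟩
      · exact absurd (isBarredPermOf_nil.1 hL) hS.ne_empty
      · obtain ⟨hB, hL⟩ := isBarredPermOf_cons.1 hL
        exact ⟨⟨⟨B, hB⟩, ⟨L, hL⟩⟩, rfl⟩

def barredPermOfEmptyEquiv :
    {L // IsBarredPermOf (∅ : Finset α) L} ≃ {L : List (Finset α) // L = []} :=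
  Equiv.subtypeEquivRight fun _ => isBarredPermOf_empty

instance finite_isBarredPermOf (S : Finset α) : Finite {L // IsBarredPermOf S L} := by
  induction S using Finset.strongInduction with
  | H S ih =>
    obtain rfl | hS := S.eq_empty_or_nonempty
    · exact Finite.of_equiv _ barredPermOfEmptyEquiv.symm
    · have (B : barredBlocks S) : Finite {L // IsBarredPermOf (S \ B) L} :=
        ih _ (ssubset_of_mem_barredBlocks B.2)
      exact Finite.of_equiv _ (sigmaBarredPermOfEquiv hS)

lemma card_isBarredPermOf_eq_sum {S : Finset α} (hS : S.Nonempty) :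
    Nat.card {L // IsBarredPermOf S L} =
      ∑ B ∈ barredBlocks S, Nat.card {L // IsBarredPermOf (S \ B) L} := by
  rw [← Nat.card_congr (sigmaBarredPermOfEquiv hS), Nat.card_sigma]
  exact sum_coe_sort _ fun B => Nat.card {L // IsBarredPermOf (S \ B) L}

lemma sum_barredBlocks_card {M : Type*} [AddCommMonoid M] (S : Finset α) (f : ℕ → M) :
    ∑ B ∈ barredBlocks S, f B.card = S.card • f 1 + S.card.choose 2 • f 2 := by
  rw [barredBlocks, sum_union (S.pairwise_disjoint_powersetCard (by decide : 1 ≠ 2)),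
    sum_powersetCard_card, sum_powersetCard_card, Nat.choose_one_right]

lemma card_isBarredPermOf (S : Finset α) :
    Nat.card {L // IsBarredPermOf S L} = barredSeq S.card := by
  induction S using Finset.strongInduction with
  | H S ih =>
    obtain rfl | hS := S.eq_empty_or_nonempty
    · simp [Nat.card_congr barredPermOfEmptyEquiv, barredSeq]
    · have hterm (B) (hB : B ∈ barredBlocks S) :
          Nat.card {L // IsBarredPermOf (S \ B) L} = barredSeq (S.card - B.card) := by
        rw [ih _ (ssubset_of_mem_barredBlocks hB), card_sdiff_of_subset (mem_barredBlocks.1 hB).1]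
      obtain ⟨n, hn⟩ : ∃ n, S.card = n + 1 := Nat.exists_eq_succ_of_ne_zero hS.card_pos.ne'
      rw [card_isBarredPermOf_eq_sum hS, sum_congr rfl hterm,
        sum_barredBlocks_card S (fun k => barredSeq (S.card - k)), hn, barredSeq_succ]
      simp only [smul_eq_mul, Nat.add_sub_cancel, show n + 1 - 2 = n - 1 by omega]

end BarredPermOf

lemma barredCount_eq_barredSeq (n : ℕ) : barredCount n = barredSeq n := by
  have h := card_isBarredPermOf (univ : Finset (Fin n))
  rwa [card_univ, Fintype.card_fin] at h

lemma barredSeq_add_two_div_factorial (n : ℕ) :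
    (barredSeq (n + 2) : ℚ) / (n + 2).factorial =
      barredSeq (n + 1) / (n + 1).factorial + 1 / 2 * (barredSeq n / n.factorial) := by
  rw [barredSeq, Nat.factorial_succ, Nat.factorial_succ]
  push_cast [Nat.cast_choose_two]
  field_simp
  ring

open PowerSeries in
/-- In `ℚ⟦X⟧`, the exponential generating function
`F(X) = Σ_{n ≥ 0} (b_n / n!) Xⁿ` satisfies `(1 − X − X²/2) · F(X) = 1`. -/
theorem barredCount_egf :
    (1 - (X : ℚ⟦X⟧) - C (1 / 2 : ℚ) * X ^ 2) *
        PowerSeries.mk (fun n => (barredCount n : ℚ) / n.factorial) = 1 := by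
  simp only [barredCount_eq_barredSeq]
  ext (_ | _ | n)
  · simp [barredSeq]
  · simp [sub_mul, mul_assoc, coeff_X_pow_mul', barredSeq]
  · simp [sub_mul, mul_assoc, coeff_X_pow_mul', barredSeq_add_two_div_factorial]
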